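/- arXiv:1610.04977 — 3 statements merged into one kernel-verified Lean document; each statement's English description precedes it below -/
import Mathlib

section
/- Let X = {x_1,...,x_k} be distinct complex numbers, and define σ_X(n) as the coefficient of n^{-s} in ∏_{i=1}^k ζ(s+x_i), i.e. σ_X(n) = ∑_{n_1⋯n_k = n} n_1^{-x_1}⋯n_k^{-x_k}. Then for a prime p and j ≥ 0, σ_X(p^j) = ∑_{i=1}^k p^{-x_i j} ∏_{l ≠ i} (1 - p^{x_i - x_l})^{-1}. -/
open Finset

/-- The arithmetic function `n ↦ n^{-x}` (and `0 ↦ 0`). -/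
noncomputable def powFn (x : ℂ) : ArithmeticFunction ℂ :=
  ⟨fun n => if n = 0 then 0 else (n : ℂ) ^ (-x), by simp⟩

/-- `σ_X(n) = ∑_{n_1 ⋯ n_k = n} n_1^{-x_1} ⋯ n_k^{-x_k}`, realized as the `k`-fold
Dirichlet convolution (= product in the ring of arithmetic functions) of the
functions `n ↦ n^{-x_i}`. -/
noncomputable def sigmaX (k : ℕ) (x : Fin k → ℂ) : ArithmeticFunction ℂ :=
  ∏ i : Fin k, powFn (x i)

lemma powFn_prime_pow (x : ℂ) {p : ℕ} (hp : p ≠ 0) (a : ℕ) :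
    powFn x (p ^ a) = ((p : ℂ) ^ (-x)) ^ a := by
  show (if p ^ a = 0 then 0 else ((p ^ a : ℕ) : ℂ) ^ (-x)) = _
  rw [if_neg (pow_ne_zero _ hp)]
  rw [Nat.cast_pow, ← Complex.natCast_cpow_natCast_mul, Complex.cpow_nat_mul]

lemma mul_apply_prime_pow (f g : ArithmeticFunction ℂ) {p : ℕ} (hp : p.Prime) (j : ℕ) :
    (f * g) (p ^ j) = ∑ a ∈ range (j + 1), f (p ^ a) * g (p ^ (j - a)) := by
  rw [ArithmeticFunction.mul_apply]
  refine (Finset.sum_bij (fun a _ => ((p : ℕ) ^ a, p ^ (j - a))) ?_ ?_ ?_ ?_).symm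
  · intro a ha
    rw [Nat.mem_divisorsAntidiagonal]
    simp only [mem_range] at ha
    refine ⟨?_, pow_ne_zero _ hp.pos.ne'⟩
    rw [← pow_add]; congr 1; omega
  · intro a _ b _ h
    exact Nat.pow_right_injective hp.two_le (congrArg Prod.fst h)
  · rintro ⟨d1, d2⟩ hd
    rw [Nat.mem_divisorsAntidiagonal] at hd
    obtain ⟨a, haj, rfl⟩ := (Nat.dvd_prime_pow hp).mp ⟨d2, hd.1.symm⟩
    refine ⟨a, mem_range.mpr (by omega), ?_⟩
    have h2 : d2 = p ^ (j - a) := by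
      have : p ^ a * d2 = p ^ a * p ^ (j - a) := by rw [hd.1, ← pow_add]; congr 1; omega
      exact Nat.eq_of_mul_eq_mul_left (pow_pos hp.pos a) this
    simp [h2]
  · intros; rfl

/-- complete homogeneous symmetric function of degree `j` -/
noncomputable def hh : ∀ k : ℕ, (Fin k → ℂ) → ℕ → ℂ
  | 0, _, j => if j = 0 then 1 else 0
  | (k + 1), t, j =>
      ∑ a ∈ range (j + 1), (t (Fin.last k)) ^ (j - a) * hh k (t ∘ Fin.castSucc) a

lemma sigmaX_eq_hh (k : ℕ) (x : Fin k → ℂ) {p : ℕ} (hp : p.Prime) (j : ℕ) :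
    sigmaX k x (p ^ j) = hh k (fun i => (p : ℂ) ^ (-x i)) j := by
  induction k generalizing j with
  | zero =>
      simp only [sigmaX, Finset.univ_eq_empty, Finset.prod_empty, hh]
      rcases Nat.eq_zero_or_pos j with rfl | hj
      · simp
      · rw [ArithmeticFunction.one_apply, if_neg, if_neg hj.ne']
        exact (Nat.one_lt_pow hj.ne' hp.one_lt).ne'
  | succ k ih =>
      have : sigmaX (k+1) x = sigmaX k (x ∘ Fin.castSucc) * powFn (x (Fin.last k)) := by
        rw [sigmaX, Fin.prod_univ_castSucc]; rfl
      rw [this, mul_apply_prime_pow _ _ hp, hh]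
      refine Finset.sum_congr rfl fun a ha => ?_
      rw [ih _ a, powFn_prime_pow _ hp.pos.ne', mul_comm]
      rfl

lemma prod_erase_last (k : ℕ) (f : Fin (k + 1) → ℂ) :
    ∏ l ∈ (univ : Finset (Fin (k + 1))).erase (Fin.last k), f l
      = ∏ l : Fin k, f (Fin.castSucc l) := by
  rw [Fin.univ_castSuccEmb, Finset.cons_eq_insert, Finset.erase_insert (by simp [Fin.ext_iff, Fin.castSuccEmb]; omega)]
  rw [Finset.prod_map]
  rfl

lemma prod_erase_castSucc (k : ℕ) (f : Fin (k + 1) → ℂ) (i : Fin k) :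
    ∏ l ∈ (univ : Finset (Fin (k + 1))).erase (Fin.castSucc i), f l
      = f (Fin.last k) * ∏ l ∈ (univ : Finset (Fin k)).erase i, f (Fin.castSucc l) := by
  rw [Fin.univ_castSuccEmb, Finset.cons_eq_insert,
    Finset.erase_insert_of_ne (Fin.castSucc_lt_last i).ne']
  rw [Finset.prod_insert (fun h => absurd (Finset.mem_of_mem_erase h) (by simp [Fin.ext_iff, Fin.castSuccEmb]; omega)),
    show i.castSucc = Fin.castSuccEmb i from rfl, ← Finset.map_erase, Finset.prod_map]
  rfl

lemma lagrange_aux {k : ℕ} (hk : 0 < k) (t : Fin k → ℂ) (ht : Function.Injective t) (T : ℂ) :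
    ∑ i : Fin k, t i ^ (k - 1) * ∏ l ∈ univ.erase i, ((t i - t l)⁻¹ * (T - t l))
      = T ^ (k - 1) := by
  classical
  have hinj : Set.InjOn t ↑(univ : Finset (Fin k)) := ht.injOn
  have hdeg : (Polynomial.X ^ (k - 1) : Polynomial ℂ).degree < ((univ : Finset (Fin k)).card : ℕ) := by
    rw [Polynomial.degree_X_pow, Finset.card_univ, Fintype.card_fin, Nat.cast_withBot,
      Nat.cast_withBot, WithBot.coe_lt_coe]
    omega
  have h := Lagrange.eq_interpolate (v := t) hinj hdeg
  have hT := congrArg (Polynomial.eval T) h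
  simp only [Polynomial.eval_pow, Polynomial.eval_X, Lagrange.interpolate_apply,
    Polynomial.eval_finset_sum, Polynomial.eval_mul, Polynomial.eval_C, Lagrange.basis,
    Polynomial.eval_prod, Lagrange.basisDivisor, Polynomial.eval_sub] at hT
  exact hT.symm

lemma pf_aux {k : ℕ} (hk : 0 < k) (t : Fin k → ℂ) (ht : Function.Injective t) (T : ℂ)
    (hT : ∀ i, t i ≠ T) :
    ∑ i : Fin k, t i ^ (k - 1) * (t i - T)⁻¹ * ∏ l ∈ univ.erase i, (t i - t l)⁻¹
      = -(T ^ (k - 1) * ∏ l : Fin k, (T - t l)⁻¹) := by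
  classical
  have hP : ∀ l, T - t l ≠ 0 := fun l => sub_ne_zero.mpr fun h => hT l h.symm
  have hPne : (∏ l : Fin k, (T - t l)) ≠ 0 := Finset.prod_ne_zero_iff.mpr fun l _ => hP l
  have A := lagrange_aux hk t ht T
  have B : ∀ i : Fin k,
      t i ^ (k - 1) * ∏ l ∈ univ.erase i, ((t i - t l)⁻¹ * (T - t l))
        = (∏ l : Fin k, (T - t l)) *
          -(t i ^ (k - 1) * (t i - T)⁻¹ * ∏ l ∈ univ.erase i, (t i - t l)⁻¹) := by
    intro i
    rw [Finset.prod_mul_distrib]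
    have h1 : ∏ l ∈ univ.erase i, (T - t l) = (∏ l : Fin k, (T - t l)) * (T - t i)⁻¹ := by
      rw [← Finset.mul_prod_erase univ _ (Finset.mem_univ i), mul_comm (T - t i),
        mul_assoc, mul_inv_cancel₀ (hP i), mul_one]
    rw [h1, show (T - t i)⁻¹ = -(t i - T)⁻¹ by rw [← neg_sub (t i) T, inv_neg]]
    ring
  rw [Finset.sum_congr rfl fun i _ => B i, ← Finset.mul_sum, Finset.sum_neg_distrib] at A
  have h2 : -(∑ i : Fin k, t i ^ (k - 1) * (t i - T)⁻¹ * ∏ l ∈ univ.erase i, (t i - t l)⁻¹)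
      = T ^ (k - 1) * (∏ l : Fin k, (T - t l))⁻¹ := by
    rw [eq_mul_inv_iff_mul_eq₀ hPne, mul_comm]
    exact A
  rw [Finset.prod_inv_distrib, ← h2, neg_neg]

lemma key : ∀ (k : ℕ), 0 < k → ∀ (t : Fin k → ℂ), Function.Injective t → ∀ j : ℕ,
    hh k t j = ∑ i : Fin k, t i ^ (j + k - 1) * ∏ l ∈ univ.erase i, (t i - t l)⁻¹ := by
  intro k
  induction k with
  | zero => omega
  | succ k ih =>
    intro _ t ht j
    rcases Nat.eq_zero_or_pos k with rfl | hk
    · show (∑ a ∈ range (j + 1), t (Fin.last 0) ^ (j - a) * hh 0 (t ∘ Fin.castSucc) a) = _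
      simp only [hh, mul_ite, mul_one, mul_zero]
      rw [Finset.sum_ite_eq' (range (j + 1)) 0 (fun a => t (Fin.last 0) ^ (j - a)),
        if_pos (Finset.mem_range.mpr (Nat.succ_pos j)), Fin.sum_univ_one]
      have h0 : (univ : Finset (Fin 1)).erase 0 = ∅ := by decide
      rw [h0, Finset.prod_empty, mul_one, Nat.sub_zero, Nat.add_sub_cancel]
      rfl
    · have ht' : Function.Injective (t ∘ Fin.castSucc) := ht.comp (Fin.castSucc_injective k)
      set T := t (Fin.last k) with hTdef
      set t' : Fin k → ℂ := t ∘ Fin.castSucc with ht'def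
      have hTne : ∀ i : Fin k, t' i ≠ T := fun i h => (Fin.castSucc_lt_last i).ne (ht h)
      have hsub : ∀ i : Fin k, t' i - T ≠ 0 := fun i => sub_ne_zero.mpr (hTne i)
      have geom : ∀ i : Fin k, (∑ a ∈ range (j + 1), t' i ^ a * T ^ (j - a))
          = (t' i ^ (j + 1) - T ^ (j + 1)) * (t' i - T)⁻¹ := by
        intro i
        rw [eq_mul_inv_iff_mul_eq₀ (hsub i)]
        simpa using geom_sum₂_mul (t' i) T (j + 1)
      have E2 : ∏ l ∈ (univ : Finset (Fin (k + 1))).erase (Fin.last k), (t (Fin.last k) - t l)⁻¹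
          = ∏ l : Fin k, (T - t' l)⁻¹ := prod_erase_last k _
      have E1 : ∀ i : Fin k,
          ∏ l ∈ (univ : Finset (Fin (k + 1))).erase (Fin.castSucc i), (t (Fin.castSucc i) - t l)⁻¹
            = (t' i - T)⁻¹ * ∏ l ∈ univ.erase i, (t' i - t' l)⁻¹ := fun i =>
        prod_erase_castSucc k _ i
      show (∑ a ∈ range (j + 1), T ^ (j - a) * hh k t' a) = _
      calc (∑ a ∈ range (j + 1), T ^ (j - a) * hh k t' a)
          = ∑ a ∈ range (j + 1), ∑ i : Fin k,
              T ^ (j - a) * (t' i ^ (a + k - 1) * ∏ l ∈ univ.erase i, (t' i - t' l)⁻¹) := by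
            refine Finset.sum_congr rfl fun a _ => ?_
            rw [ih hk t' ht' a, Finset.mul_sum]
        _ = ∑ i : Fin k, ∑ a ∈ range (j + 1),
              T ^ (j - a) * (t' i ^ (a + k - 1) * ∏ l ∈ univ.erase i, (t' i - t' l)⁻¹) :=
            Finset.sum_comm
        _ = ∑ i : Fin k, (∏ l ∈ univ.erase i, (t' i - t' l)⁻¹) *
              (t' i ^ (k - 1) * ((t' i ^ (j + 1) - T ^ (j + 1)) * (t' i - T)⁻¹)) := by
            refine Finset.sum_congr rfl fun i _ => ?_
            rw [← geom i, Finset.mul_sum, Finset.mul_sum]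
            refine Finset.sum_congr rfl fun a _ => ?_
            have hpow : t' i ^ (a + k - 1) = t' i ^ (k - 1) * t' i ^ a := by
              rw [← pow_add]; congr 1; omega
            rw [hpow]; ring
        _ = (∑ i : Fin k, t' i ^ (j + k) * ((t' i - T)⁻¹ * ∏ l ∈ univ.erase i, (t' i - t' l)⁻¹))
              + (-(T ^ (j + 1))) *
                ∑ i : Fin k, t' i ^ (k - 1) * (t' i - T)⁻¹ * ∏ l ∈ univ.erase i, (t' i - t' l)⁻¹ := by
            rw [Finset.mul_sum, ← Finset.sum_add_distrib]
            refine Finset.sum_congr rfl fun i _ => ?_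
            have hpow : t' i ^ (k - 1) * t' i ^ (j + 1) = t' i ^ (j + k) := by
              rw [← pow_add]; congr 1; omega
            linear_combination (∏ l ∈ univ.erase i, (t' i - t' l)⁻¹) * (t' i - T)⁻¹ * hpow
        _ = (∑ i : Fin k, t' i ^ (j + k) * ((t' i - T)⁻¹ * ∏ l ∈ univ.erase i, (t' i - t' l)⁻¹))
              + T ^ (j + k) * ∏ l : Fin k, (T - t' l)⁻¹ := by
            rw [pf_aux hk t' ht' T hTne]
            congr 1
            rw [neg_mul_neg, ← mul_assoc, ← pow_add]
            congr 2
            omega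
        _ = ∑ i : Fin (k + 1), t i ^ (j + (k + 1) - 1) * ∏ l ∈ univ.erase i, (t i - t l)⁻¹ := by
            have hexp : j + (k + 1) - 1 = j + k := by omega
            rw [Fin.sum_univ_castSucc, hexp]
            congr 1
            · refine Finset.sum_congr rfl fun i _ => ?_
              rw [E1 i]
              simp only [ht'def, Function.comp_apply]
            · rw [E2, ← hTdef]

/-- for distinct `x_1,…,x_k`, a prime `p` and `j ≥ 0`,
`σ_X(p^j) = ∑_i p^{-x_i j} ∏_{l ≠ i} (1 - p^{x_i - x_l})⁻¹`. -/
theorem stmt_1 (k : ℕ) (hk : 0 < k) (x : Fin k → ℂ) (hx : Function.Injective x)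
    (p : ℕ) (hp : p.Prime)
    (hnv : ∀ i l : Fin k, i ≠ l → (1 : ℂ) - (p : ℂ) ^ (x i - x l) ≠ 0)
    (j : ℕ) :
    sigmaX k x (p ^ j) =
      ∑ i : Fin k, (p : ℂ) ^ (-(x i) * (j : ℂ)) *
        ∏ l ∈ Finset.univ.erase i, ((1 : ℂ) - (p : ℂ) ^ (x i - x l))⁻¹ := by
  classical
  have hpc : (p : ℂ) ≠ 0 := Nat.cast_ne_zero.mpr hp.pos.ne'
  set t : Fin k → ℂ := fun i => (p : ℂ) ^ (-x i) with htdef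
  have htne : ∀ i, t i ≠ 0 := by
    intro i h
    exact hpc ((Complex.cpow_eq_zero_iff _ _).mp h).1
  have hratio : ∀ i l : Fin k, (p : ℂ) ^ (x i - x l) = (t i)⁻¹ * t l := by
    intro i l
    rw [sub_eq_add_neg, Complex.cpow_add _ _ hpc]
    congr 1
    show (p : ℂ) ^ (x i) = ((p : ℂ) ^ (-x i))⁻¹
    rw [← Complex.cpow_neg, neg_neg]
  have ht : Function.Injective t := by
    intro i l h
    by_contra hne
    refine hnv i l hne ?_
    rw [hratio i l, ← h, inv_mul_cancel₀ (htne i), sub_self]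
  rw [sigmaX_eq_hh k x hp j, key k hk t ht j]
  refine (Finset.sum_congr rfl fun i _ => ?_).symm
  have h1 : (p : ℂ) ^ (-(x i) * (j : ℂ)) = t i ^ j := Complex.cpow_mul_nat _ _ _
  have h2 : ∀ l ∈ univ.erase i, ((1 : ℂ) - (p : ℂ) ^ (x i - x l))⁻¹ = t i * (t i - t l)⁻¹ := by
    intro l _
    rw [hratio i l]
    have e : (1 : ℂ) - (t i)⁻¹ * t l = (t i)⁻¹ * (t i - t l) := by
      rw [mul_sub, inv_mul_cancel₀ (htne i)]
    rw [e, mul_inv, inv_inv]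
  rw [h1, Finset.prod_congr rfl h2, Finset.prod_mul_distrib, Finset.prod_const,
    Finset.card_erase_of_mem (Finset.mem_univ i), Finset.card_univ, Fintype.card_fin]
  rw [← mul_assoc, ← pow_add]
  congr 2
  omega
end

section
/- Let X = {x_1,...,x_k} be distinct complex numbers and define g_X(s,n) multiplicatively by g_X(s,p^α) = (∑_{j≥0} σ_X(p^{j+α}) p^{-js}) / (∑_{j≥0} σ_X(p^j) p^{-js}). Then for a prime p and α ≥ 0, g_X(s,p^α) = (∏_{i=1}^k (1 - p^{-s-x_i})) · ∑_{i=1}^k p^{-x_i α} (1 - p^{-x_i - s})^{-1} ∏_{l ≠ i} (1 - p^{x_i - x_l})^{-1}, for Re(s) large enough that both series converge absolutely. -/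
open Finset

/-- The multiplicative function `g_X(s,n)`, defined on each prime power `p^α || n`
by `g_X(s,p^α) = (∑_{j ≥ 0} σ_X(p^{j+α}) p^{-js}) / (∑_{j ≥ 0} σ_X(p^j) p^{-js})`. -/
noncomputable def gX (k : ℕ) (x : Fin k → ℂ) (s : ℂ) (n : ℕ) : ℂ :=
  ∏ p ∈ n.primeFactors,
    (∑' j : ℕ, sigmaX k x (p ^ (j + n.factorization p)) * (p : ℂ) ^ (-(j : ℂ) * s)) /
      (∑' j : ℕ, sigmaX k x (p ^ j) * (p : ℂ) ^ (-(j : ℂ) * s))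

lemma powFn_apply_prime_pow {c : ℂ} {p : ℕ} (hp : p.Prime) (b : ℕ) :
    powFn c (p ^ b) = ((p : ℂ) ^ (-c)) ^ b := by
  have hpb : p ^ b ≠ 0 := pow_ne_zero _ hp.pos.ne'
  have : powFn c (p ^ b) = ((p ^ b : ℕ) : ℂ) ^ (-c) := by
    simp [powFn, hpb, hp.ne_zero]
  rw [this]
  push_cast
  rw [← Complex.cpow_nat_mul' (by simp [Complex.natCast_arg, Real.pi_pos])
      (by simp [Complex.natCast_arg, Real.pi_pos.le]) (-c),
    Complex.cpow_nat_mul]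

/-- Partial-fraction / Lagrange interpolation identity. -/
lemma lagrange_pf {k : ℕ} (y : Fin k → ℂ) (hy0 : ∀ i, y i ≠ 0)
    (hyd : ∀ ⦃i l : Fin k⦄, i ≠ l → y i ≠ y l)
    (T : Finset (Fin k)) (hT : T.Nonempty) (w : ℂ) (hw : w ≠ 0)
    (hwy : ∀ l ∈ T, w ≠ y l) :
    ∑ i ∈ T, (∏ l ∈ T.erase i, (1 - y l / y i)⁻¹) * (w / (w - y i))
      = ∏ l ∈ T, w / (w - y l) := by
  have hinj : Set.InjOn (fun i => (y i)⁻¹) T := by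
    intro i _ l _ h
    by_contra hne
    exact hyd hne (inv_injective h)
  have hEv := congrArg (Polynomial.eval w⁻¹) (Lagrange.sum_basis hinj hT)
  simp only [Polynomial.eval_finset_sum, Lagrange.basis, Lagrange.basisDivisor,
    Polynomial.eval_prod, Polynomial.eval_mul, Polynomial.eval_C, Polynomial.eval_sub,
    Polynomial.eval_X, Polynomial.eval_one] at hEv
  have hBne : ∀ l ∈ T, w - y l ≠ 0 := fun l hl => sub_ne_zero.mpr (hwy l hl)
  calc ∑ i ∈ T, (∏ l ∈ T.erase i, (1 - y l / y i)⁻¹) * (w / (w - y i))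
      = ∑ i ∈ T, (∏ l ∈ T.erase i, ((y i)⁻¹ - (y l)⁻¹)⁻¹ * (w⁻¹ - (y l)⁻¹))
          * (∏ l ∈ T, w / (w - y l)) := by
        refine Finset.sum_congr rfl fun i hi => ?_
        have hfac : ∀ l ∈ T.erase i, (1 - y l / y i)⁻¹
            = (((y i)⁻¹ - (y l)⁻¹)⁻¹ * (w⁻¹ - (y l)⁻¹)) * (w / (w - y l)) := by
          intro l hl
          have hlT : l ∈ T := (Finset.mem_erase.mp hl).2
          have hli : l ≠ i := (Finset.mem_erase.mp hl).1
          have h2 : y i - y l ≠ 0 := sub_ne_zero.mpr (hyd (Ne.symm hli))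
          have h3 : y l - y i ≠ 0 := sub_ne_zero.mpr (hyd hli)
          have h4 := hBne l hlT
          have h5 : w⁻¹ - (y l)⁻¹ = (y l - w) / (w * y l) := inv_sub_inv hw (hy0 l)
          have h6 : (y i)⁻¹ - (y l)⁻¹ = (y l - y i) / (y i * y l) :=
            inv_sub_inv (hy0 i) (hy0 l)
          have h7 : 1 - y l / y i = (y i - y l) / y i := by
            rw [one_sub_div (hy0 i)]
          rw [h5, h6, h7]
          rw [inv_div, inv_div, div_mul_div_comm, div_mul_div_comm,
            div_eq_div_iff h2 (mul_ne_zero (mul_ne_zero h3 (mul_ne_zero hw (hy0 l))) h4)]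
          ring
        rw [Finset.prod_congr rfl hfac, Finset.prod_mul_distrib,
          ← Finset.mul_prod_erase T (fun l => w / (w - y l)) hi]
        ring
    _ = ∏ l ∈ T, w / (w - y l) := by rw [← Finset.sum_mul, hEv, one_mul]

/-- The key identity: value of the convolution at a prime power. -/
lemma key_identity {k : ℕ} (x : Fin k → ℂ) {p : ℕ} (hp : p.Prime)
    (y : Fin k → ℂ) (hy : ∀ i, y i = (p : ℂ) ^ (-x i))
    (hy0 : ∀ i, y i ≠ 0) (hyd : ∀ ⦃i l : Fin k⦄, i ≠ l → y i ≠ y l)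
    {S : Finset (Fin k)} (hS : S.Nonempty) :
    ∀ m : ℕ, (∏ i ∈ S, powFn (x i)) (p ^ m)
      = ∑ i ∈ S, (y i) ^ m * ∏ l ∈ S.erase i, (1 - y l / y i)⁻¹ := by
  induction hS using Finset.Nonempty.cons_induction with
  | singleton a =>
    intro m
    simp [powFn_apply_prime_pow hp, hy]
  | cons a T ha hT IH =>
    intro m
    have hne : ∀ i ∈ T, y a - y i ≠ 0 := by
      intro i hi
      exact sub_ne_zero.mpr (hyd (by rintro rfl; exact ha hi))
    have hne' : ∀ i ∈ T, y i - y a ≠ 0 := by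
      intro i hi
      exact sub_ne_zero.mpr (hyd (by rintro rfl; exact ha hi))
    rw [Finset.prod_cons, ArithmeticFunction.mul_apply,
      Nat.sum_divisorsAntidiagonal (fun d e => powFn (x a) d * (∏ i ∈ T, powFn (x i)) e),
      Nat.sum_divisors_prime_pow hp]
    have step1 : ∀ b ∈ Finset.range (m + 1),
        powFn (x a) (p ^ b) * (∏ i ∈ T, powFn (x i)) (p ^ m / p ^ b)
          = ∑ i ∈ T, (y a ^ b * y i ^ (m - b)) * ∏ l ∈ T.erase i, (1 - y l / y i)⁻¹ := by
      intro b hb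
      rw [Nat.pow_div (Nat.lt_succ_iff.mp (Finset.mem_range.mp hb)) hp.pos,
        powFn_apply_prime_pow hp, IH (m - b), Finset.mul_sum, ← hy]
      exact Finset.sum_congr rfl fun i hi => by ring
    rw [Finset.sum_congr rfl step1, Finset.sum_comm]
    rw [Finset.sum_cons, Finset.erase_cons]
    have herase : ∀ i ∈ T, (Finset.cons a T ha).erase i = insert a (T.erase i) := by
      intro i hi
      rw [Finset.cons_eq_insert, Finset.erase_insert_of_ne (by rintro rfl; exact ha hi)]
    have hPF := lagrange_pf y hy0 hyd T hT (y a) (hy0 a)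
      (fun l hl => fun h => (hne l hl) (by rw [h, sub_self]))
    have hprodform : ∏ l ∈ T, (1 - y l / y a)⁻¹ = ∏ l ∈ T, y a / (y a - y l) := by
      refine Finset.prod_congr rfl fun l hl => ?_
      rw [one_sub_div (hy0 a), inv_div]
    rw [hprodform, ← hPF, Finset.mul_sum, Finset.sum_congr rfl
      (fun i (hi : i ∈ T) => congrArg (fun t => y i ^ m * t)
        (by rw [herase i hi, Finset.prod_insert (fun h => ha (Finset.mem_of_mem_erase h))])),
      ← Finset.sum_add_distrib]
    refine Finset.sum_congr rfl fun i hi => ?_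
    have hgeom := geom_sum₂_mul (y a) (y i) (m + 1)
    have hg2 : (∑ b ∈ Finset.range (m + 1), y a ^ b * y i ^ (m - b))
        = (y a ^ (m + 1) - y i ^ (m + 1)) / (y a - y i) := by
      rw [eq_div_iff (hne i hi), ← hgeom]
      exact congrArg (· * (y a - y i)) (Finset.sum_congr rfl fun b hb => by
        rw [Nat.add_sub_cancel])
    have hg3 : ∑ b ∈ Finset.range (m + 1), y i ^ (m - b) * y a ^ b
        = (y a ^ (m + 1) - y i ^ (m + 1)) / (y a - y i) := by
      rw [← hg2]
      exact Finset.sum_congr rfl fun b _ => mul_comm _ _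
    simp_rw [mul_comm (y a ^ _) (y i ^ (m - _))]
    rw [← Finset.sum_mul, hg3, one_sub_div (hy0 i), inv_div]
    have h1 := hne i hi
    have h2 := hne' i hi
    generalize (∏ l ∈ T.erase i, (1 - y l / y i)⁻¹) = C
    field_simp
    ring

/-- for distinct `x_1,…,x_k`, a prime `p` and `α ≥ 0`, and `s` with
`Re(s + x_i) > 0` for all `i` (absolute convergence of both series),
`g_X(s,p^α) = (∏_i (1 - p^{-s-x_i})) ∑_i p^{-x_i α} (1 - p^{-x_i-s})⁻¹
∏_{l ≠ i}(1 - p^{x_i-x_l})⁻¹`. -/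
theorem stmt_2 (k : ℕ) (hk : 0 < k) (x : Fin k → ℂ) (hx : Function.Injective x)
    (p : ℕ) (hp : p.Prime) (s : ℂ) (hs : ∀ i : Fin k, 0 < (s + x i).re)
    (hnv : ∀ i l : Fin k, i ≠ l → (1 : ℂ) - (p : ℂ) ^ (x i - x l) ≠ 0)
    (α : ℕ) :
    gX k x s (p ^ α) =
      (∏ i : Fin k, ((1 : ℂ) - (p : ℂ) ^ (-s - x i))) *
        ∑ i : Fin k, (p : ℂ) ^ (-(x i) * (α : ℂ)) * ((1 : ℂ) - (p : ℂ) ^ (-(x i) - s))⁻¹ *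
          ∏ l ∈ Finset.univ.erase i, ((1 : ℂ) - (p : ℂ) ^ (x i - x l))⁻¹ := by
  have : Nonempty (Fin k) := ⟨⟨0, hk⟩⟩
  have hp0 : (p : ℂ) ≠ 0 := Nat.cast_ne_zero.mpr hp.pos.ne'
  have hcne : ∀ c : ℂ, (p : ℂ) ^ c ≠ 0 := by
    intro c h
    rw [Complex.cpow_eq_zero_iff] at h
    exact hp0 h.1
  set y : Fin k → ℂ := fun i => (p : ℂ) ^ (-x i) with hydef
  set z : ℂ := (p : ℂ) ^ (-s) with hzdef
  have hy : ∀ i, y i = (p : ℂ) ^ (-x i) := fun i => rfl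
  have hy0 : ∀ i, y i ≠ 0 := fun i => hcne _
  have hz0 : z ≠ 0 := hcne _
  have hpw : ∀ i l : Fin k, (p : ℂ) ^ (x i - x l) = y l / y i := by
    intro i l
    rw [show x i - x l = -x l - -x i by ring, Complex.cpow_sub _ _ hp0]
  have hyd : ∀ ⦃i l : Fin k⦄, i ≠ l → y i ≠ y l := by
    intro i l hne h
    apply hnv i l hne
    rw [hpw i l, ← h, div_self (hy0 i), sub_self]
  have hyz : ∀ i, y i * z = (p : ℂ) ^ (-x i + -s) := by
    intro i
    rw [Complex.cpow_add _ _ hp0]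
  have hlt : ∀ i, ‖y i * z‖ < 1 := by
    intro i
    rw [hyz i, Complex.norm_natCast_cpow_of_pos hp.pos]
    have : (-x i + -s).re = -(s + x i).re := by
      simp [Complex.add_re]
    rw [this]
    exact Real.rpow_lt_one_of_one_lt_of_neg
      (by exact_mod_cast hp.one_lt) (neg_neg_iff_pos.mpr (hs i))
  have hsub : ∀ i, (1 : ℂ) - y i * z ≠ 0 := by
    intro i h
    have h1 : y i * z = 1 := by linear_combination -h
    have h2 := hlt i
    rw [h1] at h2
    simp at h2
  -- the two tsums
  have htsum : ∀ β : ℕ, (∑' j : ℕ, sigmaX k x (p ^ (j + β)) * (p : ℂ) ^ (-(j : ℂ) * s))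
      = ∑ i : Fin k, (y i ^ β * ∏ l ∈ Finset.univ.erase i, (1 - y l / y i)⁻¹)
          * (1 - y i * z)⁻¹ := by
    intro β
    have hre : ∀ j : ℕ, sigmaX k x (p ^ (j + β)) * (p : ℂ) ^ (-(j : ℂ) * s)
        = ∑ i : Fin k, (y i ^ β * ∏ l ∈ Finset.univ.erase i, (1 - y l / y i)⁻¹)
            * (y i * z) ^ j := by
      intro j
      have hkey := key_identity x hp y hy hy0 hyd Finset.univ_nonempty (j + β)
      rw [show sigmaX k x = ∏ i : Fin k, powFn (x i) from rfl, hkey,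
        show -(j : ℂ) * s = (j : ℕ) * (-s) by push_cast; ring,
        Complex.cpow_nat_mul, Finset.sum_mul]
      refine Finset.sum_congr rfl fun i _ => ?_
      rw [pow_add, mul_pow]
      ring
    rw [tsum_congr hre, Summable.tsum_finsetSum
      (fun i _ => (summable_geometric_of_norm_lt_one (hlt i)).mul_left _)]
    exact Finset.sum_congr rfl fun i _ => by
      rw [tsum_mul_left, tsum_geometric_of_norm_lt_one (hlt i)]
  -- partial fraction for the denominator
  have hwy : ∀ l : Fin k, z⁻¹ ≠ y l := by
    intro l h
    apply hsub l
    rw [← h]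
    field_simp
    ring
  have hfrac : ∀ i : Fin k, z⁻¹ / (z⁻¹ - y i) = (1 - y i * z)⁻¹ := by
    intro i
    have h1 : z⁻¹ - y i = z⁻¹ * (1 - y i * z) := by
      field_simp
    rw [h1, div_mul_eq_div_div, div_self (inv_ne_zero hz0), one_div]
  have hPF := lagrange_pf y hy0 hyd Finset.univ Finset.univ_nonempty z⁻¹
    (inv_ne_zero hz0) (fun l _ => hwy l)
  have hD : (∑ i : Fin k, (y i ^ 0 * ∏ l ∈ Finset.univ.erase i, (1 - y l / y i)⁻¹)
      * (1 - y i * z)⁻¹) = ∏ i : Fin k, (1 - y i * z)⁻¹ := by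
    calc (∑ i : Fin k, (y i ^ 0 * ∏ l ∈ Finset.univ.erase i, (1 - y l / y i)⁻¹)
        * (1 - y i * z)⁻¹)
        = ∑ i : Fin k, (∏ l ∈ Finset.univ.erase i, (1 - y l / y i)⁻¹)
            * (z⁻¹ / (z⁻¹ - y i)) := by
          refine Finset.sum_congr rfl fun i _ => ?_
          rw [hfrac i, pow_zero, one_mul]
      _ = ∏ l : Fin k, z⁻¹ / (z⁻¹ - y l) := hPF
      _ = ∏ i : Fin k, (1 - y i * z)⁻¹ := Finset.prod_congr rfl fun i _ => hfrac i
  -- rewrite the RHS of the goal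
  have hRHS : (∏ i : Fin k, ((1 : ℂ) - (p : ℂ) ^ (-s - x i))) *
        (∑ i : Fin k, (p : ℂ) ^ (-(x i) * (α : ℂ)) * ((1 : ℂ) - (p : ℂ) ^ (-(x i) - s))⁻¹ *
          ∏ l ∈ Finset.univ.erase i, ((1 : ℂ) - (p : ℂ) ^ (x i - x l))⁻¹)
      = (∏ i : Fin k, (1 - y i * z)) *
          ∑ i : Fin k, (y i ^ α * ∏ l ∈ Finset.univ.erase i, (1 - y l / y i)⁻¹)
            * (1 - y i * z)⁻¹ := by
    congr 1
    · refine Finset.prod_congr rfl fun i _ => ?_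
      rw [show -s - x i = -x i + -s by ring, ← hyz i]
    · refine Finset.sum_congr rfl fun i _ => ?_
      rw [show -(x i) * (α : ℂ) = (α : ℕ) * (-x i) by push_cast; ring,
        Complex.cpow_nat_mul, show -(x i) - s = -x i + -s by ring, ← hyz i, ← hy i]
      rw [Finset.prod_congr rfl fun l (_ : l ∈ Finset.univ.erase i) =>
        congrArg (·⁻¹) (congrArg ((1 : ℂ) - ·) (hpw i l))]
      ring
  rw [hRHS]
  rcases Nat.eq_zero_or_pos α with rfl | hα
  · -- α = 0
    have hgx : gX k x s (p ^ 0) = 1 := by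
      simp [gX]
    rw [hgx]
    simp only [pow_zero] at hD ⊢
    rw [hD, ← Finset.prod_mul_distrib]
    rw [Finset.prod_congr rfl fun i (_ : i ∈ Finset.univ) =>
      mul_inv_cancel₀ (hsub i)]
    simp
  · -- α > 0
    have hpf : (p ^ α).primeFactors = {p} :=
      Nat.primeFactors_prime_pow hα.ne' hp
    have hfac : (p ^ α).factorization p = α := by
      rw [hp.factorization_pow, Finsupp.single_eq_same]
    rw [gX, hpf, Finset.prod_singleton, hfac]
    have hD' : (∑' j : ℕ, sigmaX k x (p ^ j) * (p : ℂ) ^ (-(j : ℂ) * s))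
        = ∏ i : Fin k, (1 - y i * z)⁻¹ := by
      rw [← hD, ← htsum 0]
      exact tsum_congr fun j => by rw [add_zero]
    rw [htsum α, hD', div_eq_mul_inv, ← Finset.prod_inv_distrib]
    simp only [inv_inv]
    rw [mul_comm]
end

section
/- Let G: ℂ → ℂ be entire, even, with G(0) = 1 and of rapid decay in every fixed vertical strip |Re(s)| ≤ A (i.e., for every B > 0, |G(s)| ≤ |s|^{−B} for |Re(s)| ≤ A and |Im(s)| sufficiently large). Let g(s) be holomorphic on Re(s) ≥ −1 with |g(s)| ≪ (1+|s|)^{B_0} there for some B_0. Define V(x) = (1/2πi)∫_{(1)} (G(s)/s) g(s) x^{−s} ds for x > 0. If additionally |g(s)| ≤ (t^3/8)^{Re(s)}(1 + c|s|^2/t) on the line Re(s) = A for a parameter t ≥ 1 and constant c > 0, then V(x) ≪ (t^3/x)^A for all x > t^3. -/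
open MeasureTheory

open Complex Set

private lemma aux_sq (r m : ℝ) (hm : 0 ≤ m) (hr : m ≤ r) : 1 + m ^ 2 ≤ (1 + r) ^ 2 := by
  nlinarith

private lemma aux_pow4_im (r m : ℝ) (hm : 0 ≤ m) (hr : m ≤ r) :
    (1 + r) ^ (-(4:ℝ)) ≤ (1 + m)⁻¹ := by
  have h1 : (0:ℝ) < 1 + r := by linarith
  rw [Real.rpow_neg h1.le]
  apply inv_anti₀ (by linarith)
  rw [show (4:ℝ) = ((4:ℕ):ℝ) by norm_num, Real.rpow_natCast]
  calc 1 + m ≤ 1 + r := by linarith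
    _ ≤ (1 + r) ^ 4 := le_self_pow₀ (by linarith) (by norm_num)

private lemma aux_pow4_sq (r m : ℝ) (hm : 0 ≤ m) (hr : m ≤ r) :
    (1 + r) ^ (-(4:ℝ)) ≤ (1 + m ^ 2)⁻¹ := by
  have h1 : (0:ℝ) < 1 + r := by linarith
  rw [Real.rpow_neg h1.le]
  apply inv_anti₀ (by positivity)
  rw [show (4:ℝ) = ((4:ℕ):ℝ) by norm_num, Real.rpow_natCast]
  calc 1 + m ^ 2 ≤ (1 + r) ^ 2 := aux_sq r m hm hr
    _ ≤ (1 + r) ^ 4 := pow_le_pow_right₀ (by linarith) (by norm_num)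

private lemma aux_pow2_sq (r m : ℝ) (hm : 0 ≤ m) (hr : m ≤ r) :
    (1 + r) ^ (-(2:ℝ)) ≤ (1 + m ^ 2)⁻¹ := by
  have h1 : (0:ℝ) < 1 + r := by linarith
  rw [Real.rpow_neg h1.le]
  apply inv_anti₀ (by positivity)
  rw [show (2:ℝ) = ((2:ℕ):ℝ) by norm_num, Real.rpow_natCast]
  exact aux_sq r m hm hr

private lemma KB (A B₀ : ℝ) (hA : 0 < A) (hB₀ : 0 ≤ B₀) (G : ℂ → ℂ)
    (hGdiff : Differentiable ℂ G)
    (hGdecay : ∀ A' : ℝ, 0 < A' → ∀ B : ℝ, 0 < B → ∃ M : ℝ, ∀ s : ℂ,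
      |s.re| ≤ A' → M ≤ |s.im| → ‖G s‖ ≤ ‖s‖ ^ (-B)) :
    ∃ D : ℝ, 0 ≤ D ∧ ∀ s : ℂ, min A 1 ≤ s.re → s.re ≤ max A 1 →
      ‖G s‖ / ‖s‖ * (1 + ‖s‖) ^ (B₀ + 4 : ℝ) ≤ D := by
  obtain ⟨M, hM⟩ := hGdecay (max A 1) (by positivity) (B₀ + 6) (by linarith)
  set a := min A 1 with ha_def
  set b := max A 1 with hb_def
  have ha : 0 < a := lt_min hA one_pos
  set M₀ : ℝ := max M 1 with hM₀_def
  set S : Set ℂ := Set.Icc a b ×ℂ Set.Icc (-M₀) M₀ with hS_def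
  have hScpt : IsCompact S := by
    rw [Metric.isCompact_iff_isClosed_bounded]
    exact ⟨isClosed_Icc.reProdIm isClosed_Icc,
      (Metric.isBounded_Icc a b).reProdIm (Metric.isBounded_Icc (-M₀) M₀)⟩
  have hne : ∀ s : ℂ, a ≤ s.re → s ≠ 0 := by
    intro s hs h0
    rw [h0] at hs
    simp at hs
    first
    | linarith
    | rcases hs with h | h <;> linarith
  have hcont : ContinuousOn
      (fun s : ℂ => ‖G s‖ / ‖s‖ * (1 + ‖s‖) ^ (B₀ + 4 : ℝ)) S := by
    apply ContinuousOn.mul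
    · apply ContinuousOn.div
      · exact (continuous_norm.comp hGdiff.continuous).continuousOn
      · exact continuous_norm.continuousOn
      · intro s hs
        rw [hS_def, Complex.mem_reProdIm] at hs
        exact norm_ne_zero_iff.mpr (hne s hs.1.1)
    · apply ContinuousOn.rpow_const
      · exact (continuous_const.add continuous_norm).continuousOn
      · intro s _
        exact Or.inr (by linarith)
  obtain ⟨D₁, hD₁⟩ := hScpt.exists_bound_of_continuousOn hcont
  refine ⟨max D₁ ((2:ℝ) ^ (B₀ + 4 : ℝ)), le_trans (by positivity) (le_max_right _ _), ?_⟩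
  intro s h1 h2
  rcases le_or_gt |s.im| M₀ with him | him
  · refine le_trans ?_ (le_max_left _ _)
    have hsS : s ∈ S := by
      rw [hS_def, Complex.mem_reProdIm]
      exact ⟨⟨h1, h2⟩, abs_le.mp him⟩
    exact le_trans (le_abs_self _) (hD₁ s hsS)
  · refine le_trans ?_ (le_max_right _ _)
    set r := ‖s‖ with hr_def
    have hr1 : 1 ≤ r := le_trans (le_trans (le_max_right M 1) him.le) (Complex.abs_im_le_norm s)
    have hr0 : (0:ℝ) < r := by linarith
    have hGb : ‖G s‖ ≤ r ^ (-(B₀ + 6)) := by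
      apply hM s _ (le_trans (le_max_left M 1) him.le)
      rw [_root_.abs_of_nonneg (by linarith : (0:ℝ) ≤ s.re)]
      exact h2
    calc ‖G s‖ / r * (1 + r) ^ (B₀ + 4 : ℝ)
        ≤ r ^ (-(B₀ + 6)) / r * (2 * r) ^ (B₀ + 4 : ℝ) := by
          gcongr
          · linarith
      _ = (2:ℝ) ^ (B₀ + 4 : ℝ) * r ^ (-(3:ℝ)) := by
          rw [Real.mul_rpow (by norm_num) hr0.le]
          rw [div_eq_mul_inv, ← Real.rpow_neg_one r, ← Real.rpow_add hr0,
            mul_comm (r ^ (-(B₀+6) + -1)) _, mul_assoc, ← Real.rpow_add hr0]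
          ring_nf
      _ ≤ (2:ℝ) ^ (B₀ + 4 : ℝ) * 1 := by
          gcongr
          exact Real.rpow_le_one_of_one_le_of_nonpos hr1 (by norm_num)

      _ = (2:ℝ) ^ (B₀ + 4 : ℝ) := mul_one _

private lemma vert_shift (f : ℂ → ℂ) (a b : ℝ) (hab : a ≤ b)
    (hf : ∀ s : ℂ, a ≤ s.re → s.re ≤ b → DifferentiableAt ℂ f s)
    (hia : Integrable fun u : ℝ => f (a + u * I))
    (hib : Integrable fun u : ℝ => f (b + u * I))
    (D : ℝ) (hd : ∀ s : ℂ, a ≤ s.re → s.re ≤ b → ‖f s‖ ≤ D / (1 + |s.im|)) :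
    ∫ u : ℝ, f (a + u * I) = ∫ u : ℝ, f (b + u * I) := by
  have hrect : ∀ T : ℝ,
      (I • ∫ y : ℝ in (-T)..T, f (b + y * I)) - I • ∫ y : ℝ in (-T)..T, f (a + y * I)
        = (∫ x : ℝ in a..b, f (x + T * I)) - ∫ x : ℝ in a..b, f (x + -(T : ℂ) * I) := by
    intro T
    have h0 := Complex.integral_boundary_rect_eq_zero_of_differentiableOn f
      (⟨a, -T⟩ : ℂ) (⟨b, T⟩ : ℂ) ?_
    · simp only [show (⟨a, -T⟩ : ℂ).re = a from rfl, show (⟨a, -T⟩ : ℂ).im = -T from rfl,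
        show (⟨b, T⟩ : ℂ).re = b from rfl, show (⟨b, T⟩ : ℂ).im = T from rfl,
        Complex.ofReal_neg] at h0
      linear_combination h0
    · intro s hs
      rw [Complex.mem_reProdIm] at hs
      obtain ⟨h1, _⟩ := hs
      rw [show (⟨a, -T⟩ : ℂ).re = a from rfl, show (⟨b, T⟩ : ℂ).re = b from rfl,
        uIcc_of_le hab] at h1
      exact (hf s h1.1 h1.2).differentiableWithinAt
  have h1 : Filter.Tendsto (fun T : ℝ => ∫ y : ℝ in (-T)..T, f (a + y * I)) Filter.atTop
      (nhds (∫ u : ℝ, f (a + u * I))) :=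
    intervalIntegral_tendsto_integral hia Filter.tendsto_neg_atTop_atBot Filter.tendsto_id
  have h2 : Filter.Tendsto (fun T : ℝ => ∫ y : ℝ in (-T)..T, f (b + y * I)) Filter.atTop
      (nhds (∫ u : ℝ, f (b + u * I))) :=
    intervalIntegral_tendsto_integral hib Filter.tendsto_neg_atTop_atBot Filter.tendsto_id
  have h3 : Filter.Tendsto
      (fun T : ℝ => (∫ x : ℝ in a..b, f (x + T * I)) - ∫ x : ℝ in a..b, f (x + -(T : ℂ) * I))
      Filter.atTop (nhds 0) := by
    apply squeeze_zero_norm' (a := fun T : ℝ => 2 * ((b - a) * (D / (1 + T))))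
    · filter_upwards [Filter.eventually_ge_atTop (0 : ℝ)] with T hT
      have key : ∀ c' : ℝ, |c'| = T →
          ‖∫ x : ℝ in a..b, f (x + (c' : ℂ) * I)‖ ≤ (b - a) * (D / (1 + T)) := by
        intro c' hc'
        have h := intervalIntegral.norm_integral_le_of_norm_le_const
          (C := D / (1 + T)) (f := fun x : ℝ => f (x + (c' : ℂ) * I)) (a := a) (b := b) ?_
        · rw [_root_.abs_of_nonneg (by linarith : (0:ℝ) ≤ b - a)] at h
          linarith [h]
        · intro x hx
          rw [Set.uIoc_of_le hab] at hx
          have hre : ((x : ℂ) + (c' : ℂ) * I).re = x := by simp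
          have him : ((x : ℂ) + (c' : ℂ) * I).im = c' := by simp
          have h2 := hd ((x : ℂ) + (c' : ℂ) * I) (by rw [hre]; exact le_of_lt hx.1)
            (by rw [hre]; exact hx.2)
          rw [him, hc'] at h2
          exact h2
      have k1 := key T (_root_.abs_of_nonneg hT)
      have k2 := key (-T) (by rw [abs_neg, _root_.abs_of_nonneg hT])
      rw [Complex.ofReal_neg] at k2
      calc ‖(∫ x : ℝ in a..b, f (x + T * I)) - ∫ x : ℝ in a..b, f (x + -(T : ℂ) * I)‖
          ≤ ‖∫ x : ℝ in a..b, f (x + T * I)‖ + ‖∫ x : ℝ in a..b, f (x + -(T : ℂ) * I)‖ :=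
            norm_sub_le _ _
        _ ≤ (b - a) * (D / (1 + T)) + (b - a) * (D / (1 + T)) := add_le_add k1 k2
        _ = 2 * ((b - a) * (D / (1 + T))) := by ring
    · have h : Filter.Tendsto (fun T : ℝ => D / (1 + T)) Filter.atTop (nhds 0) :=
        Filter.Tendsto.div_atTop tendsto_const_nhds
          (Filter.tendsto_atTop_add_const_left _ _ Filter.tendsto_id)
      simpa using (h.const_mul (b - a)).const_mul 2
  have h4 : Filter.Tendsto
      (fun T : ℝ => (I • ∫ y : ℝ in (-T)..T, f (b + y * I)) - I • ∫ y : ℝ in (-T)..T, f (a + y * I))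
      Filter.atTop (nhds ((I • ∫ u : ℝ, f (b + u * I)) - I • ∫ u : ℝ, f (a + u * I))) :=
    (h2.const_smul I).sub (h1.const_smul I)
  rw [show (fun T : ℝ => (I • ∫ y : ℝ in (-T)..T, f (b + y * I))
      - I • ∫ y : ℝ in (-T)..T, f (a + y * I)) = fun T : ℝ =>
      (∫ x : ℝ in a..b, f (x + T * I)) - ∫ x : ℝ in a..b, f (x + -(T : ℂ) * I)
      from funext hrect] at h4
  have h5 := tendsto_nhds_unique h4 h3
  have h6 : I • ((∫ u : ℝ, f (b + u * I)) - ∫ u : ℝ, f (a + u * I)) = 0 := by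
    rw [smul_sub]; exact h5
  rcases smul_eq_zero.mp h6 with h | h
  · exact absurd h I_ne_zero
  · exact (sub_eq_zero.mp h).symm


/-- let `G` be entire, even, `G(0)=1`, of rapid decay in every fixed
vertical strip; let `g` be holomorphic on `Re s ≥ −1` with polynomial growth
there. Define `V(x) = (1/2πi) ∫_{(1)} (G(s)/s) g(s) x^{−s} ds`. If
`|g(s)| ≤ (t³/8)^{Re s}(1 + c|s|²/t)` on the line `Re s = A` for a parameter
`t ≥ 1`, then `V(x) ≪ (t³/x)^A` for all `x > t³`, the implied constant
independent of `x`, `t` and `g`. -/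
theorem stmt_19 (A B₀ c : ℝ) (hA : 0 < A) (hB₀ : 0 ≤ B₀) (hc : 0 < c)
    (G : ℂ → ℂ) (hGdiff : Differentiable ℂ G) (hGeven : ∀ s : ℂ, G (-s) = G s)
    (hG0 : G 0 = 1)
    (hGdecay : ∀ A' : ℝ, 0 < A' → ∀ B : ℝ, 0 < B → ∃ M : ℝ, ∀ s : ℂ,
      |s.re| ≤ A' → M ≤ |s.im| → ‖G s‖ ≤ ‖s‖ ^ (-B)) :
    ∃ C : ℝ, ∀ (g : ℂ → ℂ) (t : ℝ), 1 ≤ t →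
      (∀ s : ℂ, -1 ≤ s.re → DifferentiableAt ℂ g s) →
      (∃ K : ℝ, ∀ s : ℂ, -1 ≤ s.re →
        ‖g s‖ ≤ K * (1 + ‖s‖) ^ B₀) →
      (∀ u : ℝ, ‖g (A + u * Complex.I)‖ ≤
        (t ^ 3 / 8) ^ A * (1 + c * (‖(A + u * Complex.I : ℂ)‖) ^ 2 / t)) →
      ∀ x : ℝ, t ^ 3 < x →
        ‖(((1 / (2 * Real.pi)) *
            ∫ u : ℝ, (G (1 + u * Complex.I) / (1 + u * Complex.I)) *
              g (1 + u * Complex.I) * (x : ℂ) ^ (-(1 + u * Complex.I))) : ℂ)‖ ≤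
          C * (t ^ 3 / x) ^ A := by
  obtain ⟨D, hD0, hKB⟩ := KB A B₀ hA hB₀ G hGdiff hGdecay
  have ha : 0 < min A 1 := lt_min hA one_pos
  have hπ : (0:ℝ) < Real.pi := Real.pi_pos
  refine ⟨D * (1 + c) / (2 * (8:ℝ) ^ A), ?_⟩
  intro g t ht hgdiff hgK hgA x hx
  obtain ⟨K, hK⟩ := hgK
  have hK0 : 0 ≤ K := by
    have h := hK 0 (by norm_num)
    simp at h
    exact le_trans (norm_nonneg _) h
  have ht1 : (1:ℝ) ≤ t ^ 3 := by simpa using pow_le_pow_left₀ zero_le_one ht 3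
  have hx1 : (1:ℝ) < x := lt_of_le_of_lt ht1 hx
  have hx0 : (0:ℝ) < x := by linarith
  have hxC : (x:ℂ) ≠ 0 := Complex.ofReal_ne_zero.mpr hx0.ne'
  set f : ℂ → ℂ := fun s => G s / s * g s * (x:ℂ) ^ (-s) with hf_def
  have hne : ∀ s : ℂ, min A 1 ≤ s.re → s ≠ 0 := by
    intro s hs h0
    rw [h0] at hs
    simp at hs
    first
    | linarith
    | rcases hs with h | h <;> linarith
  have hfdiff : ∀ s : ℂ, min A 1 ≤ s.re → s.re ≤ max A 1 → DifferentiableAt ℂ f s := by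
    intro s h1 h2
    refine DifferentiableAt.mul (DifferentiableAt.mul ?_ ?_) ?_
    · exact (hGdiff s).div differentiableAt_id (hne s h1)
    · exact hgdiff s (by linarith)
    · exact differentiableAt_id.neg.const_cpow (Or.inl hxC)
  have habs : ∀ s : ℂ, ‖f s‖
      = ‖G s‖ / ‖s‖ * ‖g s‖ * x ^ (-s.re) := by
    intro s
    rw [hf_def]
    simp only
    rw [norm_mul, norm_mul, norm_div, Complex.norm_cpow_eq_rpow_re_of_pos hx0, Complex.neg_re]
  have hstrip : ∀ s : ℂ, min A 1 ≤ s.re → s.re ≤ max A 1 →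
      ‖f s‖ ≤ D * K * (1 + ‖s‖) ^ (-(4:ℝ)) := by
    intro s h1 h2
    have hp : (0:ℝ) < 1 + ‖s‖ := by positivity
    have hGs : ‖G s‖ / ‖s‖
        ≤ D * (1 + ‖s‖) ^ (-(B₀ + 4:ℝ)) := by
      have h2' : ‖G s‖ / ‖s‖ ≤ D / (1 + ‖s‖) ^ (B₀ + 4:ℝ) :=
        (le_div_iff₀ (by positivity)).mpr (hKB s h1 h2)
      refine le_trans h2' (le_of_eq ?_)
      rw [Real.rpow_neg hp.le, div_eq_mul_inv]
    rw [habs s]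
    have hxre : x ^ (-s.re) ≤ 1 :=
      Real.rpow_le_one_of_one_le_of_nonpos hx1.le (by linarith)
    calc ‖G s‖ / ‖s‖ * ‖g s‖ * x ^ (-s.re)
        ≤ (D * (1 + ‖s‖) ^ (-(B₀ + 4:ℝ)))
            * (K * (1 + ‖s‖) ^ B₀) * 1 := by
          refine mul_le_mul (mul_le_mul hGs (hK s (by linarith)) (norm_nonneg _)
            (by positivity)) hxre (by positivity)
            (mul_nonneg (by positivity) (mul_nonneg hK0 (by positivity)))
      _ = D * K * ((1 + ‖s‖) ^ (-(B₀ + 4:ℝ)) * (1 + ‖s‖) ^ B₀) := by ring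
      _ = D * K * (1 + ‖s‖) ^ (-(4:ℝ)) := by
          rw [← Real.rpow_add hp]; norm_num
  have hline : ∀ σ : ℝ, min A 1 ≤ σ → σ ≤ max A 1 →
      Integrable (fun u : ℝ => f (σ + u * I)) := by
    intro σ h1 h2
    have hre : ∀ u : ℝ, ((σ:ℂ) + u * I).re = σ := by intro u; simp
    have him : ∀ u : ℝ, ((σ:ℂ) + u * I).im = u := by intro u; simp
    have hcont : Continuous fun u : ℝ => f (σ + u * I) := by
      rw [continuous_iff_continuousAt]
      intro u
      exact ((hfdiff _ (by rw [hre]; exact h1) (by rw [hre]; exact h2)).continuousAt).comp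
        (by fun_prop)
    apply Integrable.mono' (integrable_inv_one_add_sq.const_mul (D * K))
      hcont.aestronglyMeasurable
    filter_upwards with u
    refine le_trans (hstrip _ (by rw [hre]; exact h1) (by rw [hre]; exact h2)) ?_
    have haux := aux_pow4_sq (‖(σ:ℂ) + u * I‖) |((σ:ℂ) + u * I).im|
      (abs_nonneg _) (Complex.abs_im_le_norm _)
    rw [him u, _root_.sq_abs] at haux
    exact mul_le_mul_of_nonneg_left haux (mul_nonneg hD0 hK0)
  have hdecayD : ∀ s : ℂ, min A 1 ≤ s.re → s.re ≤ max A 1 →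
      ‖f s‖ ≤ D * K / (1 + |s.im|) := by
    intro s h1 h2
    refine le_trans (hstrip s h1 h2) ?_
    rw [div_eq_mul_inv]
    exact mul_le_mul_of_nonneg_left
      (aux_pow4_im _ _ (abs_nonneg _) (Complex.abs_im_le_norm s)) (mul_nonneg hD0 hK0)
  have h1i := hline 1 (min_le_right A 1) (le_max_right A 1)
  have hAi := hline A (min_le_left A 1) (le_max_left A 1)
  have heq : (∫ u : ℝ, f (1 + u * I)) = ∫ u : ℝ, f (A + u * I) := by
    rcases le_total A 1 with h | h
    · exact (vert_shift f A 1 h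
        (fun s u v => hfdiff s (le_trans (min_le_left A 1) u) (le_trans v (le_max_right A 1)))
        hAi h1i (D * K)
        (fun s u v => hdecayD s (le_trans (min_le_left A 1) u)
          (le_trans v (le_max_right A 1)))).symm
    · exact vert_shift f 1 A h
        (fun s u v => hfdiff s (le_trans (min_le_right A 1) u) (le_trans v (le_max_left A 1)))
        h1i hAi (D * K)
        (fun s u v => hdecayD s (le_trans (min_le_right A 1) u) (le_trans v (le_max_left A 1)))
  set c₂ : ℝ := (t ^ 3 / 8) ^ A * x ^ (-A) * (D * (1 + c)) with hc2
  have hc20 : 0 ≤ c₂ := by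
    rw [hc2]
    exact mul_nonneg (by positivity) (mul_nonneg hD0 (by linarith))
  have hPt : ∀ u : ℝ, ‖f (A + u * I)‖ ≤ c₂ * (1 + u ^ 2)⁻¹ := by
    intro u
    have hre : ((A:ℂ) + u * I).re = A := by simp
    have him : ((A:ℂ) + u * I).im = u := by simp
    set r := ‖(A:ℂ) + u * I‖ with hr_def
    have hp : (0:ℝ) < 1 + r := by positivity
    have hu_r : |u| ≤ r := by rw [← him]; exact Complex.abs_im_le_norm _
    have hr0 : (0:ℝ) ≤ r := norm_nonneg _
    have hGs : ‖G ((A:ℂ) + u * I)‖ / r ≤ D * (1 + r) ^ (-(4:ℝ)) := by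
      have h := hKB _ (by rw [hre]; exact min_le_left A 1) (by rw [hre]; exact le_max_left A 1)
      have h2' : ‖G ((A:ℂ) + u * I)‖ / r ≤ D / (1 + r) ^ (B₀ + 4:ℝ) :=
        (le_div_iff₀ (by positivity)).mpr h
      refine le_trans h2' ?_
      rw [div_eq_mul_inv, ← Real.rpow_neg hp.le]
      exact mul_le_mul_of_nonneg_left
        (Real.rpow_le_rpow_of_exponent_le (by linarith) (by linarith)) hD0
    have hgs : ‖g ((A:ℂ) + u * I)‖
        ≤ (t ^ 3 / 8) ^ A * ((1 + c) * (1 + r) ^ (2:ℕ)) := by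
      refine le_trans (hgA u) ?_
      refine mul_le_mul_of_nonneg_left ?_ (by positivity)
      have hdiv : c * r ^ 2 / t ≤ c * r ^ 2 := div_le_self (by positivity) ht
      nlinarith
    rw [habs _, hre]
    calc ‖G ((A:ℂ) + u * I)‖ / r * ‖g ((A:ℂ) + u * I)‖ * x ^ (-A)
        ≤ (D * (1 + r) ^ (-(4:ℝ))) * ((t ^ 3 / 8) ^ A * ((1 + c) * (1 + r) ^ (2:ℕ)))
            * x ^ (-A) := by
          refine mul_le_mul (mul_le_mul hGs hgs (norm_nonneg _) (by positivity))
            le_rfl (by positivity)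
            (mul_nonneg (mul_nonneg hD0 (by positivity)) (by positivity))
      _ = c₂ * ((1 + r) ^ (-(4:ℝ)) * (1 + r) ^ (2:ℕ)) := by rw [hc2]; ring
      _ = c₂ * (1 + r) ^ (-(2:ℝ)) := by
          rw [← Real.rpow_natCast (1 + r) 2, ← Real.rpow_add hp]; norm_num
      _ ≤ c₂ * (1 + u ^ 2)⁻¹ := by
          have h := aux_pow2_sq r |u| (abs_nonneg u) hu_r
          rw [_root_.sq_abs] at h
          exact mul_le_mul_of_nonneg_left h hc20
  have hBnd : ‖∫ u : ℝ, f (A + u * I)‖ ≤ c₂ * Real.pi := by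
    have h := norm_integral_le_of_norm_le (integrable_inv_one_add_sq.const_mul c₂)
      (Filter.Eventually.of_forall hPt)
    rwa [MeasureTheory.integral_const_mul, integral_univ_inv_one_add_sq] at h
  have hgoal_eq : (∫ u : ℝ, (G (1 + u * I) / (1 + u * I)) *
      g (1 + u * I) * (x:ℂ) ^ (-(1 + u * I))) = ∫ u : ℝ, f (A + u * I) := heq
  rw [norm_mul, hgoal_eq]
  have habs1 : ‖1 / (2 * (Real.pi : ℂ))‖ = 1 / (2 * Real.pi) := by
    rw [norm_div, norm_one, norm_mul, Complex.norm_two, Complex.norm_real, Real.norm_eq_abs,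
      _root_.abs_of_pos hπ]
  rw [habs1]
  have hfin : ‖∫ u : ℝ, f (A + u * I)‖ ≤ c₂ * Real.pi := hBnd
  calc 1 / (2 * Real.pi) * ‖∫ u : ℝ, f (A + u * I)‖
      ≤ 1 / (2 * Real.pi) * (c₂ * Real.pi) :=
        mul_le_mul_of_nonneg_left hfin (by positivity)
    _ = D * (1 + c) / (2 * (8:ℝ) ^ A) * (t ^ 3 / x) ^ A := by
        rw [hc2, Real.div_rpow (by positivity) (by norm_num : (0:ℝ) ≤ 8),
          Real.div_rpow (by positivity) hx0.le, Real.rpow_neg hx0.le]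
        have h8 : (8:ℝ) ^ A ≠ 0 := by positivity
        have hxA : (x:ℝ) ^ A ≠ 0 := by positivity
        field_simp
    _ ≤ D * (1 + c) / (2 * (8:ℝ) ^ A) * (t ^ 3 / x) ^ A := le_rfl
end
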